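/- arXiv:2311.09924 — 3 statements merged into one kernel-verified Lean document; each statement's English description precedes it below -/
import Mathlib

section
/- Let G be a group, I the augmentation ideal of Q[G], and F: Q[G] → Q a linear map vanishing on I^3 with F(1) = 0. Define C(a,b) = F(a) + F(b) − F(ab). Then C is linear in the second variable: C(a, bc) = C(a,b) + C(a,c) for all a, b, c in G. -/
/-! Since `F 1 = 0`, expanding `(a - 1)(b - 1)(c - 1) ∈ I ^ 3` shows that
`C a (b * c) - C a b - C a c` is `F ((a - 1)(b - 1)(c - 1)) = 0`. -/

theorem MonoidAlgebra.of_sub_one_mem_ker_lift_one {k G : Type*} [CommRing k] [Monoid G] (g : G) :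
    MonoidAlgebra.of k G g - 1 ∈ RingHom.ker (MonoidAlgebra.lift k k G (1 : G →* k)) := by
  simp [RingHom.mem_ker]

theorem Ideal.mul_mul_mem_pow_three {R : Type*} [Semiring R] {I : Ideal R} {x y z : R}
    (hx : x ∈ I) (hy : y ∈ I) (hz : z ∈ I) : x * y * z ∈ I ^ 3 := by
  rw [Submodule.pow_succ, Submodule.pow_succ, Submodule.pow_one]
  exact Submodule.mul_mem_mul (Submodule.mul_mem_mul hx hy) hz

theorem LinearMap.map_mul_mul_of_map_sub_one_mul {k R M : Type*} [CommRing k] [Ring R]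
    [Algebra k R] [AddCommGroup M] [Module k M] (F : R →ₗ[k] M) {x y z : R}
    (h : F ((x - 1) * (y - 1) * (z - 1)) = 0) (hF1 : F 1 = 0) :
    F (x * y * z) = F (x * y) + F (x * z) + F (y * z) - F x - F y - F z := by
  have hexp : (x - 1) * (y - 1) * (z - 1)
      = x * y * z - x * y - x * z - y * z + x + y + z - 1 := by noncomm_ring
  rw [hexp] at h
  simp only [map_sub, map_add, hF1, sub_zero] at h
  rw [← sub_eq_zero, ← h]
  abel

/-- Same setting; `C` is linear in the second variable. -/
theorem stmt_1 (G : Type*) [Group G]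
    (I : Ideal (MonoidAlgebra ℚ G))
    (hI : I = RingHom.ker (MonoidAlgebra.lift ℚ ℚ G (1 : G →* ℚ)))
    (F : MonoidAlgebra ℚ G →ₗ[ℚ] ℚ)
    (hF3 : ∀ x ∈ I ^ 3, F x = 0)
    (hF1 : F 1 = 0)
    (C : G → G → ℚ)
    (hC : ∀ a b : G, C a b =
      F (MonoidAlgebra.of ℚ G a) + F (MonoidAlgebra.of ℚ G b)
        - F (MonoidAlgebra.of ℚ G (a * b)))
    (a b c : G) :
    C a (b * c) = C a b + C a c := by
  have hmem (g : G) : MonoidAlgebra.of ℚ G g - 1 ∈ I :=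
    hI ▸ MonoidAlgebra.of_sub_one_mem_ker_lift_one g
  have hcubic := F.map_mul_mul_of_map_sub_one_mul
    (hF3 _ (Ideal.mul_mul_mem_pow_three (hmem a) (hmem b) (hmem c))) hF1
  simp only [← map_mul] at hcubic
  rw [hC, hC, hC, ← mul_assoc]
  linarith
end

section
/- Let G be a group and g ∈ G, n ≥ 1. Then g − 1 lies in the n-th power of the augmentation ideal I of Q[G] if g lies in the n-th term of the lower central series of G. (In particular, if g ∈ [G,G] then g − 1 ∈ I².) -/
/-!
For a left ideal `J` of `k[G]`, the elements `g` with `g - 1 ∈ J` form a subgroup. Since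
`ab - ba = (a - 1)(b - 1) - (b - 1)(a - 1)` and `[p, q] - 1 = pq (p⁻¹q⁻¹ - q⁻¹p⁻¹)`, the commutator
of an element of this subgroup for `J ^ m` with one for `J` lies in the subgroup for `J ^ (m + 1)`.
Every `g - 1` lies in the augmentation ideal, so the subgroup for `J = I` is all of `G`, and
induction along the lower central series applies.
-/

open scoped commutatorElement

namespace MonoidAlgebra

variable {k G : Type*} [Ring k] [Group G]

/-- For `J = I ^ n`, with `I` the augmentation ideal, this is the `n`-th dimension subgroup. -/
def subOneMemSubgroup (J : Ideal (MonoidAlgebra k G)) : Subgroup G where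
  carrier := {g | of k G g - 1 ∈ J}
  one_mem' := by simp only [Set.mem_ofPred_eq, map_one, sub_self, J.zero_mem]
  mul_mem' {a b} ha hb := by
    have h : of k G (a * b) - 1 = of k G a * (of k G b - 1) + (of k G a - 1) := by
      rw [map_mul]; noncomm_ring
    simpa only [Set.mem_ofPred_eq, h] using J.add_mem (J.mul_mem_left _ hb) ha
  inv_mem' {a} ha := by
    have h : of k G a⁻¹ - 1 = -(of k G a⁻¹ * (of k G a - 1)) := by
      rw [mul_sub, ← map_mul, inv_mul_cancel, map_one]; noncomm_ring
    simpa only [Set.mem_ofPred_eq, h] using J.neg_mem (J.mul_mem_left _ ha)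

theorem mem_subOneMemSubgroup {J : Ideal (MonoidAlgebra k G)} {g : G} :
    g ∈ subOneMemSubgroup J ↔ of k G g - 1 ∈ J :=
  Iff.rfl

theorem of_mul_sub_of_mul_eq (a b : G) :
    of k G (a * b) - of k G (b * a) =
      (of k G a - 1) * (of k G b - 1) - (of k G b - 1) * (of k G a - 1) := by
  rw [map_mul, map_mul]; noncomm_ring

theorem of_commutatorElement_sub_one_eq (p q : G) :
    of k G ⁅p, q⁆ - 1 = of k G (p * q) * (of k G (p⁻¹ * q⁻¹) - of k G (q⁻¹ * p⁻¹)) := by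
  rw [mul_sub, ← map_mul, ← map_mul, ← mul_inv_rev p q, mul_inv_cancel, map_one,
    commutatorElement_def, ← mul_assoc]

theorem commutator_subOneMemSubgroup_pow_le (J : Ideal (MonoidAlgebra k G)) {m : ℕ} (hm : m ≠ 0) :
    ⁅subOneMemSubgroup (J ^ m), subOneMemSubgroup J⁆ ≤ subOneMemSubgroup (J ^ (m + 1)) := by
  rw [Subgroup.commutator_le]
  intro p hp q hq
  have hp' := mem_subOneMemSubgroup.mp (inv_mem hp)
  have hq' := mem_subOneMemSubgroup.mp (inv_mem hq)
  rw [mem_subOneMemSubgroup, of_commutatorElement_sub_one_eq, of_mul_sub_of_mul_eq]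
  refine Ideal.mul_mem_left _ _ (sub_mem ?_ ?_)
  · exact Submodule.pow_succ J ▸ Submodule.mul_mem_mul hp' hq'
  · exact Submodule.pow_succ' J hm ▸ Submodule.mul_mem_mul hq' hp'

theorem lowerCentralSeries_le_subOneMemSubgroup_pow {J : Ideal (MonoidAlgebra k G)}
    (hJ : subOneMemSubgroup J = ⊤) (n : ℕ) :
    (⊤ : Subgroup G).lowerCentralSeries n ≤ subOneMemSubgroup (J ^ (n + 1)) := by
  induction n with
  | zero => rw [Subgroup.lowerCentralSeries_zero, zero_add, Submodule.pow_one, hJ]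
  | succ n ih =>
    rw [Subgroup.lowerCentralSeries_succ]
    exact (Subgroup.commutator_mono ih hJ.ge).trans
      (commutator_subOneMemSubgroup_pow_le J n.succ_ne_zero)

theorem subOneMemSubgroup_ker_lift_one {k : Type*} [CommRing k] :
    subOneMemSubgroup (RingHom.ker (lift k k G 1)) = ⊤ := by
  refine eq_top_iff.mpr fun g _ ↦ ?_
  rw [mem_subOneMemSubgroup, RingHom.mem_ker, map_sub, lift_of, map_one, MonoidHom.one_apply,
    sub_self]

end MonoidAlgebra

/-- if `g` lies in the `n`-th term of the lower central series of `G`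
(numbered so that `G(1) = G`, i.e. `lowerCentralSeries G (n-1)`), then `g - 1` lies
in the `n`-th power of the augmentation ideal of `ℚ[G]`. -/
theorem stmt_2 (G : Type*) [Group G]
    (I : Ideal (MonoidAlgebra ℚ G))
    (hI : I = RingHom.ker (MonoidAlgebra.lift ℚ ℚ G (1 : G →* ℚ)))
    (n : ℕ) (hn : 1 ≤ n) (g : G)
    (hg : g ∈ (⊤ : Subgroup G).lowerCentralSeries (n - 1)) :
    MonoidAlgebra.of ℚ G g - 1 ∈ I ^ n := by
  subst hI
  rw [← Nat.sub_add_cancel hn]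
  exact MonoidAlgebra.lowerCentralSeries_le_subOneMemSubgroup_pow
    MonoidAlgebra.subOneMemSubgroup_ker_lift_one (n - 1) hg
end

section
/- With H = A ⊕ B of dimension 2g over Q and the diagonal GL_g(Z)-action as above, assume n < g. Then in (H^{⊗2n})_{GL_g(Z)}, every basic tensor in which the basis vector a₁ appears p times (p > 0) and b₁ appears 0 times is equal to zero. -/
/-! If some index `s` occurs an odd number of times among the factors `a_s`, `b_s`, the
diagonal sign matrix with `-1` at `s` acts on the tensor by `-1`, so the tensor dies in the
coinvariants. Otherwise every index that occurs does so at least twice, hence at most `n < g`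
indices occur and some index `s` is fresh. Replacing one factor `a₁` by `a_s` gives a tensor
`c`; the transvection `1 + E_{1,s}` sends `a_s ↦ a_s + a₁` and fixes every other factor of `c`
(it moves only `b₁` among the `b_j`), so it maps `c` to `c + f` and `f = M·c - c`. -/

open scoped TensorProduct

/-- `H = A ⊕ B`, `A = B = ℚ^g`. -/
abbrev HSp (g : ℕ) : Type := (Fin g → ℚ) × (Fin g → ℚ)

/-- basis vectors `a_i` -/
def ea {g : ℕ} (i : Fin g) : HSp g := (Pi.single i 1, 0)

/-- basis vectors `b_i` -/
def eb {g : ℕ} (i : Fin g) : HSp g := (0, Pi.single i 1)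

/-- The diagonal action of `GL_g(ℤ)` on `H`: standardly on the `a`-part, by
inverse-transpose on the `b`-part. -/
noncomputable def glAct {g : ℕ} (M : GL (Fin g) ℤ) : HSp g →ₗ[ℚ] HSp g :=
  LinearMap.prodMap
    (Matrix.toLin' ((M : Matrix (Fin g) (Fin g) ℤ).map (Int.cast : ℤ → ℚ)))
    (Matrix.toLin' (((M⁻¹ : GL (Fin g) ℤ) : Matrix (Fin g) (Fin g) ℤ).transpose.map
      (Int.cast : ℤ → ℚ)))

/-- The subspace of `H^{⊗2n}` generated by `v - M·v`, whose quotient is the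
coinvariants `(H^{⊗2n})_{GL_g(ℤ)}`. -/
noncomputable def coinvRel (g n : ℕ) :
    Submodule ℚ (PiTensorProduct ℚ (fun _ : Fin (2 * n) => HSp g)) :=
  Submodule.span ℚ
    {x | ∃ (M : GL (Fin g) ℤ) (v : PiTensorProduct ℚ (fun _ : Fin (2 * n) => HSp g)),
      x = v - PiTensorProduct.map (fun _ => glAct M) v}

open Finset

theorem exists_forall_ne_of_even_card_fiber {α β : Type*} [Fintype α] [Fintype β]
    [DecidableEq β] (φ : α → β) (heven : ∀ b, Even #{a | φ a = b})
    (hcard : Fintype.card α < 2 * Fintype.card β) : ∃ b, ∀ a, φ a ≠ b := by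
  by_contra! hsurj
  have htwo : ∀ b, 2 ≤ #{a | φ a = b} := fun b ↦ by
    obtain ⟨a, ha⟩ := hsurj b
    obtain ⟨m, hm⟩ := heven b
    have : 0 < #{a | φ a = b} := card_pos.2 ⟨a, by simp [ha]⟩
    omega
  have : 2 * Fintype.card β ≤ Fintype.card α := calc
    2 * Fintype.card β = ∑ _b : β, 2 := by simp [mul_comm]
    _ ≤ ∑ b, #{a | φ a = b} := sum_le_sum fun b _ ↦ htwo b
    _ = Fintype.card α := (card_eq_sum_card_fiberwise fun a _ ↦ mem_coe.2 (mem_univ (φ a))).symm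
  omega

namespace PiTensorProduct

theorem map_tprod_eq_add_tprod_update {ι R M : Type*} [Fintype ι] [DecidableEq ι] [CommRing R]
    [AddCommGroup M] [Module R M] (L : M →ₗ[R] M) (c : ι → M) (k₀ : ι) (x : M)
    (hfix : ∀ k ≠ k₀, L (c k) = c k) (hk₀ : L (c k₀) = c k₀ + x) :
    map (fun _ ↦ L) (tprod R c) = tprod R c + tprod R (Function.update c k₀ x) := by
  have hLc : (fun k ↦ L (c k)) = Function.update c k₀ (c k₀ + x) := by
    ext1 k
    rcases eq_or_ne k k₀ with rfl | hk
    · simp [hk₀]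
    · simp [hfix k hk, hk]
  rw [map_tprod, hLc, MultilinearMap.map_update_add, Function.update_eq_self]

end PiTensorProduct

namespace Matrix

variable {n R : Type*} [Fintype n] [DecidableEq n] [CommRing R]

def TransvectionStruct.toGL (t : TransvectionStruct n R) : GL n R :=
  ⟨t.toMatrix, t.inv.toMatrix, t.mul_inv, t.inv_mul⟩

@[simp]
theorem TransvectionStruct.coe_toGL (t : TransvectionStruct n R) :
    (t.toGL : Matrix n n R) = transvection t.i t.j t.c := rfl

theorem TransvectionStruct.coe_toGL_inv (t : TransvectionStruct n R) :
    ((t.toGL⁻¹ : GL n R) : Matrix n n R) = transvection t.i t.j (-t.c) := rfl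

def diagonalGL (u : n → Rˣ) : GL n R :=
  ⟨diagonal fun i ↦ u i, diagonal fun i ↦ ↑(u i)⁻¹, by simp, by simp⟩

end Matrix

open Matrix

section Action

variable {g n : ℕ}

theorem sub_map_mem_coinvRel (M : GL (Fin g) ℤ)
    (v : PiTensorProduct ℚ fun _ : Fin (2 * n) ↦ HSp g) :
    v - PiTensorProduct.map (fun _ ↦ glAct M) v ∈ coinvRel g n :=
  Submodule.subset_span ⟨M, v, rfl⟩

theorem mem_coinvRel_of_map_eq_neg (M : GL (Fin g) ℤ)
    {v : PiTensorProduct ℚ fun _ : Fin (2 * n) ↦ HSp g}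
    (hv : PiTensorProduct.map (fun _ ↦ glAct M) v = -v) : v ∈ coinvRel g n := by
  have h := sub_map_mem_coinvRel M v
  rwa [hv, sub_neg_eq_add, ← two_smul ℚ, Submodule.smul_mem_iff _ two_ne_zero] at h

theorem glAct_ea (M : GL (Fin g) ℤ) (i : Fin g) :
    glAct M (ea i) = (fun r ↦ ((M : Matrix (Fin g) (Fin g) ℤ) r i : ℚ), 0) := by
  ext r <;> simp [glAct, ea]

theorem glAct_eb (M : GL (Fin g) ℤ) (j : Fin g) :
    glAct M (eb j) =
      (0, fun r ↦ (((M⁻¹ : GL (Fin g) ℤ) : Matrix (Fin g) (Fin g) ℤ) j r : ℚ)) := by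
  ext r <;> simp [glAct, eb]

theorem glAct_diagonalGL_ea (u : Fin g → ℤˣ) (i : Fin g) :
    glAct (diagonalGL u) (ea i) = ((u i : ℤ) : ℚ) • ea i := by
  rw [glAct_ea]
  ext r <;> rcases eq_or_ne r i with rfl | h <;> simp [diagonalGL, ea, *]

theorem glAct_diagonalGL_eb (u : Fin g → ℤˣ) (j : Fin g) :
    glAct (diagonalGL u) (eb j) = (((u j)⁻¹ : ℤˣ) : ℚ) • eb j := by
  rw [glAct_eb]
  ext r <;> rcases eq_or_ne j r with rfl | h <;> simp [diagonalGL, eb, *]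

end Action

section Transvection

variable {g : ℕ} (t : TransvectionStruct (Fin g) ℤ)

theorem glAct_toGL_ea_j : glAct t.toGL (ea t.j) = ea t.j + (t.c : ℚ) • ea t.i := by
  rw [glAct_ea]
  ext r
  · rcases eq_or_ne r t.i with rfl | hi
    · simp [transvection, ea, one_apply, t.hij]
    · simp [transvection, ea, one_apply, hi, single_apply_of_row_ne hi.symm, Pi.single_apply]
  · simp [ea]

theorem glAct_toGL_ea_of_ne {k : Fin g} (hk : k ≠ t.j) : glAct t.toGL (ea k) = ea k := by
  rw [glAct_ea]
  ext r
  · simp [transvection, ea, one_apply, hk.symm, Pi.single_apply]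
  · simp [ea]

theorem glAct_toGL_eb_of_ne {k : Fin g} (hk : k ≠ t.i) : glAct t.toGL (eb k) = eb k := by
  rw [glAct_eb, TransvectionStruct.coe_toGL_inv]
  ext r
  · simp [eb]
  · simp [transvection, eb, one_apply, single_apply_of_row_ne hk.symm, Pi.single_apply, eq_comm]

end Transvection

section BasicTensor

variable {g n : ℕ} (f : Fin (2 * n) → HSp g)

theorem eq_of_ea_eq {x : HSp g} {i j : Fin g} (hx : x = ea i ∨ x = eb i) (h : x = ea j) :
    i = j := by
  subst h
  by_contra hij
  rcases hx with h | h <;>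
    simpa [ea, eb, Pi.single_apply, Ne.symm hij] using congrFun (congrArg Prod.fst h) j

theorem tprod_mem_coinvRel_of_odd_card {idx : Fin (2 * n) → Fin g}
    (hidx : ∀ k, f k = ea (idx k) ∨ f k = eb (idx k)) {s : Fin g}
    (hodd : Odd #{k | idx k = s}) : PiTensorProduct.tprod ℚ f ∈ coinvRel g n := by
  let u : Fin g → ℤˣ := Pi.mulSingle s (-1)
  have hu : ∀ i, ((u i : ℤ) : ℚ) = if i = s then -1 else 1 := fun i ↦ by
    by_cases h : i = s <;> simp [u, h]
  have hsign : ∀ k, glAct (diagonalGL u) (f k) = (if idx k = s then -1 else 1 : ℚ) • f k := by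
    intro k
    rcases hidx k with h | h
    · rw [h, glAct_diagonalGL_ea, hu]
    · rw [h, glAct_diagonalGL_eb, Int.units_inv_eq_self, hu]
  refine mem_coinvRel_of_map_eq_neg (diagonalGL u) ?_
  rw [PiTensorProduct.map_tprod, funext hsign, MultilinearMap.map_smul_univ, prod_ite,
    prod_const, prod_const, one_pow, mul_one, hodd.neg_one_pow, neg_one_smul]

theorem tprod_mem_coinvRel_of_fresh (hbasic : ∀ k, (∃ i, f k = ea i) ∨ ∃ i, f k = eb i)
    {i s : Fin g} (hsi : i ≠ s) {k₀ : Fin (2 * n)} (hk₀ : f k₀ = ea i)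
    (hs : ∀ k, f k ≠ ea s) (hi : ∀ k, f k ≠ eb i) :
    PiTensorProduct.tprod ℚ f ∈ coinvRel g n := by
  let t : TransvectionStruct (Fin g) ℤ := ⟨i, s, hsi, 1⟩
  set c := Function.update f k₀ (ea s)
  have hfix : ∀ k ≠ k₀, glAct t.toGL (c k) = c k := by
    intro k hk
    rw [show c k = f k from Function.update_of_ne hk _ _]
    rcases hbasic k with ⟨j, hj⟩ | ⟨j, hj⟩ <;> rw [hj]
    · exact glAct_toGL_ea_of_ne t (by rintro rfl; exact hs k hj)
    · exact glAct_toGL_eb_of_ne t (by rintro rfl; exact hi k hj)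
  have hmove : glAct t.toGL (c k₀) = c k₀ + ea i := by
    rw [show c k₀ = ea s from Function.update_self _ _ _]
    exact (glAct_toGL_ea_j t).trans (by simp [t])
  have h := PiTensorProduct.map_tprod_eq_add_tprod_update _ c k₀ (ea i) hfix hmove
  rw [Function.update_idem, ← hk₀, Function.update_eq_self] at h
  have hf : PiTensorProduct.tprod ℚ f = -(PiTensorProduct.tprod ℚ c -
      PiTensorProduct.map (fun _ ↦ glAct t.toGL) (PiTensorProduct.tprod ℚ c)) := by
    rw [h]; abel
  exact hf ▸ neg_mem (sub_map_mem_coinvRel _ _)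

end BasicTensor

/-- assume `n < g`. A basic tensor in which `a₁` appears `p > 0` times
and `b₁` appears `0` times is zero in the coinvariants quotient. -/
theorem stmt_6 (g n : ℕ) (hng : n < g) (f : Fin (2 * n) → HSp g)
    (hbasic : ∀ k, (∃ i, f k = ea i) ∨ (∃ i, f k = eb i))
    (hp : 0 < (Finset.univ.filter fun k => f k = ea (⟨0, by omega⟩ : Fin g)).card)
    (hq : (Finset.univ.filter fun k => f k = eb (⟨0, by omega⟩ : Fin g)).card = 0) :
    PiTensorProduct.tprod ℚ f ∈ coinvRel g n := by
  have hbasic' : ∀ k, ∃ i, f k = ea i ∨ f k = eb i := fun k ↦ by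
    rcases hbasic k with ⟨i, h⟩ | ⟨i, h⟩ <;> exact ⟨i, by simp [h]⟩
  choose idx hidx using hbasic'
  by_cases hodd : ∃ s, Odd #{k | idx k = s}
  · obtain ⟨s, hs⟩ := hodd
    exact tprod_mem_coinvRel_of_odd_card f hidx hs
  simp only [not_exists, Nat.not_odd_iff_even] at hodd
  obtain ⟨s, hs⟩ := exists_forall_ne_of_even_card_fiber idx hodd (by simpa using hng)
  obtain ⟨k₀, hk₀⟩ := Finset.card_pos.1 hp
  rw [Finset.mem_filter] at hk₀
  refine tprod_mem_coinvRel_of_fresh f hbasic (s := s) ?_ hk₀.2 ?_ ?_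
  · exact eq_of_ea_eq (hidx k₀) hk₀.2 ▸ hs k₀
  · exact fun k hk ↦ hs k (eq_of_ea_eq (hidx k) hk)
  · simpa using hq
end
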